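/- arXiv:1510.09163 — 3 statements merged into one kernel-verified Lean document; each statement's English description precedes it below -/
import Mathlib

section
/- Let A be a symmetric positive semidefinite 3×3 matrix, let z > 0 and a > 0 be real numbers. Then Y := (1/(2a))[−z·1 + (z²·1 + 4a·A)^{1/2}] (using the principal square root of the symmetric positive definite matrix z²·1 + 4a·A) is symmetric positive semidefinite and satisfies the quadratic matrix equation z·Y = A − a·Y². Moreover, Y commutes with A. -/
open Matrix

section OldSqrt

open scoped ComplexOrder

/-- The positive semidefinite square root of a positive semidefinite matrix
(the definition `Matrix.PosSemidef.sqrt` of Mathlib, Dec 2024, since removed). -/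
noncomputable def Matrix.PosSemidef.sqrt {n : Type*} [Fintype n] [DecidableEq n]
    {𝕜 : Type*} [RCLike 𝕜] {A : Matrix n n 𝕜} (hA : A.PosSemidef) : Matrix n n 𝕜 :=
  hA.1.eigenvectorUnitary.1 * diagonal ((↑) ∘ (√·) ∘ hA.1.eigenvalues) *
  (star hA.1.eigenvectorUnitary : Matrix n n 𝕜)

end OldSqrt

/-!
Write `S` for the square root of `M = z² + 4aA`. Since `S² = z² + 4aA`, the quadratic formula,
which only involves `S` and scalars, shows that `Y = (S - z)/(2a)` solves `aY² + zY = A`; and `S`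
commutes with `S²`, hence with `A`. In an eigenbasis of `M`, `S - z` is diagonal with entries
`√λᵢ - z`, which are nonnegative because `M - z² = 4aA` is positive semidefinite, i.e. `λᵢ ≥ z²`.
-/

namespace Matrix

variable {n 𝕜 : Type*} [Fintype n] [DecidableEq n] [RCLike 𝕜]

open scoped ComplexOrder

theorem posSemidef_unitary_conj_diagonal_sub_smul_one_iff (U : unitary (Matrix n n 𝕜))
    (d : n → ℝ) (c : ℝ) :
    ((U : Matrix n n 𝕜) * diagonal (RCLike.ofReal ∘ d) * star (U : Matrix n n 𝕜) - c • 1).PosSemidef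
      ↔ ∀ i, c ≤ d i := by
  have hconj : (U : Matrix n n 𝕜) * diagonal (RCLike.ofReal ∘ d) * star (U : Matrix n n 𝕜) - c • 1
      = (U : Matrix n n 𝕜) * diagonal (RCLike.ofReal ∘ (d - fun _ ↦ c)) *
        star (U : Matrix n n 𝕜) := by
    rw [← Unitary.conjStarAlgAut_apply (S := ℝ), ← Unitary.conjStarAlgAut_apply (S := ℝ),
      ← map_one (Unitary.conjStarAlgAut ℝ _ U), ← map_smul, ← map_sub]
    congr 1
    ext i j
    by_cases hij : i = j <;> simp [hij, RCLike.real_smul_eq_coe_mul]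
  rw [hconj, Unitary.isUnit_coe.posSemidef_star_right_conjugate_iff, posSemidef_diagonal_iff]
  simp [sub_nonneg]

namespace PosSemidef

variable {M : Matrix n n 𝕜}

theorem sqrt_mul_self (hM : M.PosSemidef) : hM.sqrt * hM.sqrt = M := by
  conv_rhs => rw [hM.1.spectral_theorem]
  rw [sqrt, ← Unitary.conjStarAlgAut_apply (S := 𝕜), ← map_mul, diagonal_mul_diagonal]
  congr 2
  funext i
  simp [← RCLike.ofReal_mul, Real.mul_self_sqrt (hM.eigenvalues_nonneg i)]

theorem posSemidef_sqrt_sub_smul_one {c : ℝ} (hM : M.PosSemidef)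
    (h : (M - c ^ 2 • 1).PosSemidef) : (hM.sqrt - c • 1).PosSemidef := by
  rw [hM.1.spectral_theorem, Unitary.conjStarAlgAut_apply,
    posSemidef_unitary_conj_diagonal_sub_smul_one_iff] at h
  rw [sqrt, posSemidef_unitary_conj_diagonal_sub_smul_one_iff]
  exact fun i ↦ Real.le_sqrt_of_sq_le (h i)

end PosSemidef

end Matrix

section QuadraticFormula

variable {K R : Type*} [Field K] [Ring R] [Algebra K R] {A S : R} {a z : K}

theorem commute_of_mul_self_eq (ha : a ≠ 0) (hS : S * S = z • 1 + a • A) : Commute S A := by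
  have hSS : Commute S (z • 1 + a • A) := hS ▸ (Commute.refl S).mul_right (Commute.refl S)
  have hSA : Commute S (a • A) := by
    simpa using hSS.sub_right ((Commute.one_right S).smul_right z)
  exact (Commute.smul_right_iff₀ ha).mp hSA

theorem smul_eq_sub_smul_sq_of_mul_self_eq [NeZero (2 : K)] (ha : a ≠ 0)
    (hS : S * S = z ^ 2 • 1 + (4 * a) • A) :
    z • ((1 / (2 * a)) • (-(z • 1) + S)) = A - a • ((1 / (2 * a)) • (-(z • 1) + S)) ^ 2 := by
  have hsq : (-(z • 1) + S) ^ 2 = (2 * z ^ 2) • 1 - (2 * z) • S + (4 * a) • A := by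
    simp only [sq, add_mul, mul_add, neg_mul, mul_neg, smul_mul_assoc, mul_smul_comm, one_mul,
      mul_one, hS]
    module
  rw [smul_pow, hsq]
  match_scalars <;> field_simp
  ring

end QuadraticFormula

theorem stmt4_general (A : Matrix (Fin 3) (Fin 3) ℝ) (hA : A.PosSemidef)
    (z a : ℝ) (ha : 0 < a)
    (hM : (z ^ 2 • (1 : Matrix (Fin 3) (Fin 3) ℝ) + (4 * a) • A).PosSemidef) :
    (((1 / (2 * a)) • (-(z • (1 : Matrix (Fin 3) (Fin 3) ℝ)) + hM.sqrt)).PosSemidef) ∧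
    z • ((1 / (2 * a)) • (-(z • (1 : Matrix (Fin 3) (Fin 3) ℝ)) + hM.sqrt)) =
      A - a • ((1 / (2 * a)) • (-(z • (1 : Matrix (Fin 3) (Fin 3) ℝ)) + hM.sqrt)) ^ 2 ∧
    ((1 / (2 * a)) • (-(z • (1 : Matrix (Fin 3) (Fin 3) ℝ)) + hM.sqrt)) * A =
      A * ((1 / (2 * a)) • (-(z • (1 : Matrix (Fin 3) (Fin 3) ℝ)) + hM.sqrt)) := by
  have hS : hM.sqrt * hM.sqrt = z ^ 2 • 1 + (4 * a) • A := hM.sqrt_mul_self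
  have hSA : Commute hM.sqrt A := commute_of_mul_self_eq (by positivity) hS
  have hSz : (hM.sqrt - z • 1).PosSemidef :=
    hM.posSemidef_sqrt_sub_smul_one (by simpa using hA.smul (by positivity : (0 : ℝ) ≤ 4 * a))
  refine ⟨?_, smul_eq_sub_smul_sq_of_mul_self_eq ha.ne' hS, ?_⟩
  · rw [neg_add_eq_sub]
    exact hSz.smul (by positivity)
  · exact ((((Commute.one_left A).smul_left z).neg_left.add_left hSA).smul_left _).eq

theorem stmt4 (A : Matrix (Fin 3) (Fin 3) ℝ) (hA : A.PosSemidef)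
    (z a : ℝ) (hz : 0 < z) (ha : 0 < a)
    (hM : (z ^ 2 • (1 : Matrix (Fin 3) (Fin 3) ℝ) + (4 * a) • A).PosSemidef) :
    (((1 / (2 * a)) • (-(z • (1 : Matrix (Fin 3) (Fin 3) ℝ)) + hM.sqrt)).PosSemidef) ∧
    z • ((1 / (2 * a)) • (-(z • (1 : Matrix (Fin 3) (Fin 3) ℝ)) + hM.sqrt)) =
      A - a • ((1 / (2 * a)) • (-(z • (1 : Matrix (Fin 3) (Fin 3) ℝ)) + hM.sqrt)) ^ 2 ∧
    ((1 / (2 * a)) • (-(z • (1 : Matrix (Fin 3) (Fin 3) ℝ)) + hM.sqrt)) * A =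
      A * ((1 / (2 * a)) • (-(z • (1 : Matrix (Fin 3) (Fin 3) ℝ)) + hM.sqrt)) :=
  stmt4_general A hA z a ha hM
end

section
/- Weak invariance of the substructural update: let F₀ be an invertible 3×3 matrix with det F₀ = 1, let C₁ⁿ and C_i be symmetric positive definite 3×3 matrices, and λ ≥ 0. Define the update U(B, C) := unimodular part of (B + λ C). Then U(F₀^{-T} C₁ⁿ F₀^{-1}, F₀^{-T} C_i F₀^{-1}) = F₀^{-T} U(C₁ⁿ, C_i) F₀^{-1}. -/
open Matrix

noncomputable def unimod (A : Matrix (Fin 3) (Fin 3) ℝ) : Matrix (Fin 3) (Fin 3) ℝ :=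
  (A.det ^ (-(1/3) : ℝ)) • A

theorem stmt10 (F₀ B Ci : Matrix (Fin 3) (Fin 3) ℝ) (hF₀ : F₀.det = 1)
    (hB : B.PosDef) (hCi : Ci.PosDef) (lam : ℝ) (hlam : 0 ≤ lam) :
    unimod ((F₀⁻¹)ᵀ * B * F₀⁻¹ + lam • ((F₀⁻¹)ᵀ * Ci * F₀⁻¹)) =
      (F₀⁻¹)ᵀ * unimod (B + lam • Ci) * F₀⁻¹ := by
  have hinv : (F₀⁻¹).det = 1 := by
    rw [det_nonsing_inv, hF₀]; simp
  have hconj : (F₀⁻¹)ᵀ * B * F₀⁻¹ + lam • ((F₀⁻¹)ᵀ * Ci * F₀⁻¹)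
      = (F₀⁻¹)ᵀ * (B + lam • Ci) * F₀⁻¹ := by
    rw [Matrix.mul_add, Matrix.add_mul]
    congr 1
    rw [Matrix.mul_smul, Matrix.smul_mul]
  rw [hconj, unimod, unimod]
  rw [det_mul, det_mul, det_transpose, hinv]
  simp only [Matrix.mul_smul, Matrix.smul_mul, one_mul, mul_one]
end

section
/- Weak invariance of the implicit corrector equation with P = C_i: let F₀ be invertible with det F₀ = 1, and suppose symmetric positive definite 3×3 matrices Cⁿ_i, C̄, C₁, C₂ and scalars μ, c₁, c₂, ξ, 𝔉 > 0, β, ε ∈ ℝ are given. If Z solves Z = Cⁿ_i + (2ξ/𝔉)(μ C̄ − (c₁/2) Z C₁^{-1} Z − (c₂/2) Z C₂^{-1} Z) + βΔt·Z + ε·Z, then Z' := F₀^{-T} Z F₀^{-1} solves the same equation with Cⁿ_i, C̄, C₁, C₂ replaced by their transforms F₀^{-T}(·)F₀^{-1}. -/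
open Matrix

theorem stmt11 (F₀ Cn Cbar C₁ C₂ Z : Matrix (Fin 3) (Fin 3) ℝ)
    (hF₀ : F₀.det = 1)
    (hCn : Cn.PosDef) (hCbar : Cbar.PosDef) (hC₁ : C₁.PosDef) (hC₂ : C₂.PosDef)
    (μ c₁ c₂ ξ 𝔉 : ℝ) (hμ : 0 < μ) (hc₁ : 0 < c₁) (hc₂ : 0 < c₂) (hξ : 0 < ξ) (h𝔉 : 0 < 𝔉)
    (β ε Δt : ℝ)
    (hZ : Z = Cn + (2 * ξ / 𝔉) • (μ • Cbar - (c₁ / 2) • (Z * C₁⁻¹ * Z)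
        - (c₂ / 2) • (Z * C₂⁻¹ * Z)) + (β * Δt) • Z + ε • Z) :
    (F₀⁻¹)ᵀ * Z * F₀⁻¹ =
      (F₀⁻¹)ᵀ * Cn * F₀⁻¹
      + (2 * ξ / 𝔉) • (μ • ((F₀⁻¹)ᵀ * Cbar * F₀⁻¹)
          - (c₁ / 2) • (((F₀⁻¹)ᵀ * Z * F₀⁻¹) * ((F₀⁻¹)ᵀ * C₁ * F₀⁻¹)⁻¹ * ((F₀⁻¹)ᵀ * Z * F₀⁻¹))
          - (c₂ / 2) • (((F₀⁻¹)ᵀ * Z * F₀⁻¹) * ((F₀⁻¹)ᵀ * C₂ * F₀⁻¹)⁻¹ * ((F₀⁻¹)ᵀ * Z * F₀⁻¹)))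
      + (β * Δt) • ((F₀⁻¹)ᵀ * Z * F₀⁻¹) + ε • ((F₀⁻¹)ᵀ * Z * F₀⁻¹) := by
  have hFu : IsUnit F₀.det := by rw [hF₀]; exact isUnit_one
  have hFi : F₀⁻¹ * F₀ = 1 := Matrix.nonsing_inv_mul F₀ hFu
  have hFiT : F₀ᵀ * (F₀⁻¹)ᵀ = 1 := by
    rw [Matrix.transpose_nonsing_inv]
    exact Matrix.mul_nonsing_inv _ (by simpa using hFu)
  have key : ∀ (C : Matrix (Fin 3) (Fin 3) ℝ), C.PosDef →
      ((F₀⁻¹)ᵀ * C * F₀⁻¹)⁻¹ = F₀ * C⁻¹ * F₀ᵀ := by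
    intro C hC
    have hCu : IsUnit C.det := isUnit_iff_ne_zero.2 (ne_of_gt hC.det_pos)
    rw [Matrix.mul_inv_rev, Matrix.mul_inv_rev, Matrix.nonsing_inv_nonsing_inv _ hFu,
      Matrix.transpose_nonsing_inv, Matrix.nonsing_inv_nonsing_inv _ (by simpa using hFu)]
    rw [Matrix.mul_assoc]
  have conj : ∀ (C : Matrix (Fin 3) (Fin 3) ℝ), C.PosDef →
      ((F₀⁻¹)ᵀ * Z * F₀⁻¹) * ((F₀⁻¹)ᵀ * C * F₀⁻¹)⁻¹ * ((F₀⁻¹)ᵀ * Z * F₀⁻¹)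
        = (F₀⁻¹)ᵀ * (Z * C⁻¹ * Z) * F₀⁻¹ := by
    intro C hC
    rw [key C hC]
    calc (F₀⁻¹)ᵀ * Z * F₀⁻¹ * (F₀ * C⁻¹ * F₀ᵀ) * ((F₀⁻¹)ᵀ * Z * F₀⁻¹)
        = (F₀⁻¹)ᵀ * Z * (F₀⁻¹ * F₀) * C⁻¹ * (F₀ᵀ * (F₀⁻¹)ᵀ) * Z * F₀⁻¹ := by
          simp only [Matrix.mul_assoc]
      _ = (F₀⁻¹)ᵀ * (Z * C⁻¹ * Z) * F₀⁻¹ := by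
          rw [hFi, hFiT]; simp only [Matrix.mul_one, Matrix.mul_assoc]
  rw [conj C₁ hC₁, conj C₂ hC₂]
  nth_rewrite 1 [hZ]
  simp only [Matrix.add_mul, Matrix.mul_add, Matrix.sub_mul, Matrix.mul_sub,
    Matrix.smul_mul, Matrix.mul_smul]
end
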